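/- Let f : ℝ^n → ℝ^C be a classifier and let I : ℝ^n × {1,…,C} → ℝ^u be an interpreter satisfying the completeness axiom: Σ_{i=1}^{u} [I(x,c)]_i = f_c(x) for all inputs x and classes c. Let x be an input predicted as class y, and let y′ ≠ y be a target class with f_y(x) > f_{y′}(x). If a perturbed input x′ satisfies the interpretation discrepancy constraint (1/2)(‖I(x,y) − I(x′,y)‖₁ + ‖I(x,y′) − I(x′,y′)‖₁) < (1/2)(f_y(x) − f_{y′}(x)), then x′ cannot be a successful targeted attack toward y′; that is, f_{y′}(x′) < f_y(x′). -/

import Mathlib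

/-! By completeness each score is the sum of its interpretation map, so from `x` to `x'` the
score of `y` drops, and that of `y'` rises, by at most the `ℓ₁` change of the corresponding map.
Together these changes stay below the margin `f_y(x) - f_{y'}(x)`, so the order is preserved. -/

open Finset

theorem abs_sum_sub_sum_le_sum_abs_sub {ι α : Type*} [AddCommGroup α] [LinearOrder α]
    [IsOrderedAddMonoid α] (s : Finset ι) (a b : ι → α) :
    |∑ i ∈ s, a i - ∑ i ∈ s, b i| ≤ ∑ i ∈ s, |a i - b i| := by
  rw [← sum_sub_distrib]
  exact abs_sum_le_sum_abs _ _

theorem abs_score_sub_le_of_completeness {X κ ι : Type*} [Fintype ι]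
    (f : X → κ → ℝ) (I : X → κ → ι → ℝ) (hcomp : ∀ x c, ∑ i, I x c i = f x c)
    (x x' : X) (c : κ) :
    |f x c - f x' c| ≤ ∑ i, |I x c i - I x' c i| := by
  simpa only [hcomp] using abs_sum_sub_sum_le_sum_abs_sub univ (I x c) (I x' c)

theorem small_discrepancy_prevents_targeted_attack_general
    (n C u : ℕ)
    (f : (Fin n → ℝ) → Fin C → ℝ)
    (I : (Fin n → ℝ) → Fin C → Fin u → ℝ)
    (hcomp : ∀ x c, ∑ i, I x c i = f x c)
    (x x' : Fin n → ℝ) (y y' : Fin C)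
    (hdisc : (1 / 2) * ((∑ i, |I x y i - I x' y i|) + (∑ i, |I x y' i - I x' y' i|))
      < (1 / 2) * (f x y - f x y')) :
    f x' y' < f x' y := by
  have hdrop := (abs_le.mp (abs_score_sub_le_of_completeness f I hcomp x x' y)).2
  have hrise := (abs_le.mp (abs_score_sub_le_of_completeness f I hcomp x x' y')).1
  linarith

/-- **Constraining interpretation discrepancy prevents successful attacks.**
If the interpreter `I` satisfies the completeness axiom, `x` is predicted as
class `y`, `y' ≠ y` is a target class with `f_y(x) > f_{y'}(x)`, and the
perturbed input `x'` satisfies the interpretation discrepancy constraint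
`(1/2)(‖I(x,y) − I(x',y)‖₁ + ‖I(x,y') − I(x',y')‖₁) < (1/2)(f_y(x) − f_{y'}(x))`,
then `x'` cannot be a successful targeted attack toward `y'`:
`f_{y'}(x') < f_y(x')`. -/
theorem small_discrepancy_prevents_targeted_attack
    (n C u : ℕ)
    (f : (Fin n → ℝ) → Fin C → ℝ)
    (I : (Fin n → ℝ) → Fin C → Fin u → ℝ)
    (hcomp : ∀ x c, ∑ i, I x c i = f x c)
    (x x' : Fin n → ℝ) (y y' : Fin C)
    (hy : ∀ j, f x j ≤ f x y)
    (hne : y' ≠ y)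
    (hmargin : f x y' < f x y)
    (hdisc : (1 / 2) * ((∑ i, |I x y i - I x' y i|) + (∑ i, |I x y' i - I x' y' i|))
      < (1 / 2) * (f x y - f x y')) :
    f x' y' < f x' y :=
  small_discrepancy_prevents_targeted_attack_general n C u f I hcomp x x' y y' hdisc
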